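/- Fix an integer d ≥ 1 and reals γ > 0, φ > 0, k > 0, and let ℓ* be the least ℓ ∈ ℕ with φ·2^{(d+γ)(ℓ−1)} ≥ k. Let a : ℕ → ℝ satisfy 0 ≤ a_ℓ ≤ a_{ℓ+1} and 2·a_{ℓ+1} ≤ 2^γ·a_ℓ for all ℓ ∈ ℕ. Define α̂ = 2^{d·ℓ*}·a_{ℓ*}/2 and β̂ = 2^{d}·a_{ℓ*}/(2·φ·2^{γ(ℓ*−1)}). Then (i) for every ℓ ∈ ℕ, 2^{−ℓd}·α̂ + φ·2^{γ(ℓ−1)}·2^{−d}·β̂ ≥ a_ℓ, and (ii) α̂ + k·β̂ ≤ 2^{d·ℓ*}·a_{ℓ*}. -/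

import Mathlib

/-!
With `A = a ℓ*`, the constraint for level `ℓ` reads
`a ℓ ≤ 2^{d(ℓ* - ℓ)} A / 2 + 2^{γ(ℓ - ℓ*)} A / 2`. Below `ℓ*` the first term alone is at least
`A ≥ a ℓ` (monotonicity and `d ≥ 1`); above `ℓ*` iterating `a (ℓ+1) ≤ (2^γ / 2) a ℓ` makes the
second term alone large enough. For the objective, `k β̂ ≤ φ 2^{(d+γ)(ℓ* - 1)} β̂ = α̂` because `ℓ*`
satisfies the defining inequality.
-/

open Real

theorem le_div_two_pow_mul_of_two_mul_succ_le {a : ℕ → ℝ} {c : ℝ} (hc : 0 ≤ c)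
    (h : ∀ n, 2 * a (n + 1) ≤ c * a n) (m n : ℕ) : a (m + n) ≤ (c / 2) ^ n * a m := by
  induction n with
  | zero => simp
  | succ n ih =>
    calc a (m + (n + 1)) ≤ c / 2 * a (m + n) := by rw [← add_assoc]; linarith [h (m + n)]
      _ ≤ c / 2 * ((c / 2) ^ n * a m) := by gcongr
      _ = (c / 2) ^ (n + 1) * a m := by ring

theorem le_two_rpow_mul_div_two_of_two_mul_succ_le {a : ℕ → ℝ} {γ : ℝ} (ha : ∀ n, 0 ≤ a n)
    (h : ∀ n, 2 * a (n + 1) ≤ 2 ^ γ * a n) (m : ℕ) {n : ℕ} (hn : 1 ≤ n) :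
    a (m + n) ≤ 2 ^ (γ * n) * a m / 2 := by
  have hpow : ((2 : ℝ) ^ γ / 2) ^ n ≤ 2 ^ (γ * n) / 2 := by
    rw [div_pow, ← rpow_natCast ((2 : ℝ) ^ γ), ← rpow_mul zero_le_two]
    gcongr
    exact le_self_pow₀ one_le_two (by omega)
  calc a (m + n) ≤ ((2 : ℝ) ^ γ / 2) ^ n * a m :=
        le_div_two_pow_mul_of_two_mul_succ_le (by positivity) h m n
    _ ≤ 2 ^ (γ * n) / 2 * a m := by gcongr; exact ha m
    _ = 2 ^ (γ * n) * a m / 2 := by ring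

theorem le_two_rpow_add_two_rpow {a : ℕ → ℝ} {d γ : ℝ} (hd : 1 ≤ d) (ha : ∀ n, 0 ≤ a n)
    (hmono : Monotone a) (hratio : ∀ n, 2 * a (n + 1) ≤ 2 ^ γ * a n) (s ℓ : ℕ) :
    a ℓ ≤ 2 ^ (d * (s - ℓ : ℝ)) * a s / 2 + 2 ^ (γ * (ℓ - s : ℝ)) * a s / 2 := by
  rcases lt_trichotomy ℓ s with hlt | rfl | hgt
  · have hgap : (1 : ℝ) ≤ s - ℓ := by
      have : (ℓ : ℝ) + 1 ≤ s := by exact_mod_cast hlt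
      linarith
    have htwo : (2 : ℝ) ≤ 2 ^ (d * (s - ℓ : ℝ)) := by
      simpa using rpow_le_rpow_of_exponent_le one_le_two (one_le_mul_of_one_le_of_one_le hd hgap)
    have := ha s
    nlinarith [hmono hlt.le, rpow_nonneg zero_le_two (γ * (ℓ - s : ℝ))]
  · simp
  · obtain ⟨n, hn, rfl⟩ : ∃ n, 1 ≤ n ∧ ℓ = s + n := ⟨ℓ - s, by omega, by omega⟩
    have hexp : γ * ((s + n : ℕ) - s : ℝ) = γ * n := by push_cast; ring
    rw [hexp]
    have := le_two_rpow_mul_div_two_of_two_mul_succ_le ha hratio s hn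
    have : 0 ≤ 2 ^ (d * (s - (s + n : ℕ) : ℝ)) * a s / 2 := by have := ha s; positivity
    linarith

theorem dual_constraint_eq (d s ℓ : ℕ) {γ φ : ℝ} (hφ : φ ≠ 0) (A : ℝ) :
    (2 : ℝ) ^ (-((ℓ : ℝ) * (d : ℝ))) * ((2 : ℝ) ^ (d * s) * A / 2)
        + φ * (2 : ℝ) ^ (γ * ((ℓ : ℝ) - 1)) * (2 : ℝ) ^ (-(d : ℝ)) *
          ((2 : ℝ) ^ d * A / (2 * (φ * (2 : ℝ) ^ (γ * ((s : ℝ) - 1)))))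
      = 2 ^ (d * (s - ℓ : ℝ)) * A / 2 + 2 ^ (γ * (ℓ - s : ℝ)) * A / 2 := by
  have hα : (2 : ℝ) ^ (-((ℓ : ℝ) * d)) * 2 ^ (d * s) = 2 ^ (d * (s - ℓ : ℝ)) := by
    rw [← rpow_natCast, ← rpow_add two_pos]; push_cast; ring_nf
  have hβ : (2 : ℝ) ^ (γ * ((ℓ : ℝ) - 1)) * 2 ^ (-(d : ℝ)) * 2 ^ d
      = 2 ^ (γ * (ℓ - s : ℝ)) * 2 ^ (γ * ((s : ℝ) - 1)) := by
    rw [← rpow_natCast, ← rpow_add two_pos, ← rpow_add two_pos, ← rpow_add two_pos]; ring_nf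
  rw [← hα]
  field_simp
  linear_combination A * hβ

theorem dual_objective_le (d s : ℕ) {γ φ k A : ℝ} (hφ : 0 < φ) (hA : 0 ≤ A)
    (hk : k ≤ φ * (2 : ℝ) ^ (((d : ℝ) + γ) * ((s : ℝ) - 1))) :
    (2 : ℝ) ^ (d * s) * A / 2
        + k * ((2 : ℝ) ^ d * A / (2 * (φ * (2 : ℝ) ^ (γ * ((s : ℝ) - 1)))))
      ≤ (2 : ℝ) ^ (d * s) * A := by
  have hexp : (2 : ℝ) ^ (((d : ℝ) + γ) * ((s : ℝ) - 1)) * 2 ^ d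
      = 2 ^ (d * s) * 2 ^ (γ * ((s : ℝ) - 1)) := by
    rw [← rpow_natCast, ← rpow_natCast, ← rpow_add two_pos, ← rpow_add two_pos]; push_cast; ring_nf
  calc _ ≤ (2 : ℝ) ^ (d * s) * A / 2
        + φ * (2 : ℝ) ^ (((d : ℝ) + γ) * ((s : ℝ) - 1))
          * ((2 : ℝ) ^ d * A / (2 * (φ * (2 : ℝ) ^ (γ * ((s : ℝ) - 1))))) := by gcongr
    _ = (2 : ℝ) ^ (d * s) * A := by
      field_simp
      linear_combination A * hexp

theorem stmt_3_general (d : ℕ) (hd : 1 ≤ d) (γ φ k : ℝ) (hφ : 0 < φ)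
    (ℓstar : ℕ)
    (hstar : IsLeast {ℓ : ℕ | k ≤ φ * (2 : ℝ) ^ (((d : ℝ) + γ) * ((ℓ : ℝ) - 1))} ℓstar)
    (a : ℕ → ℝ)
    (ha0 : ∀ ℓ, 0 ≤ a ℓ)
    (hamono : ∀ ℓ, a ℓ ≤ a (ℓ + 1))
    (haratio : ∀ ℓ : ℕ, 2 * a (ℓ + 1) ≤ (2 : ℝ) ^ γ * a ℓ) :
    (∀ ℓ : ℕ,
      a ℓ ≤ (2 : ℝ) ^ (-((ℓ : ℝ) * (d : ℝ))) * ((2 : ℝ) ^ (d * ℓstar) * a ℓstar / 2)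
        + φ * (2 : ℝ) ^ (γ * ((ℓ : ℝ) - 1)) * (2 : ℝ) ^ (-(d : ℝ)) *
          ((2 : ℝ) ^ d * a ℓstar / (2 * (φ * (2 : ℝ) ^ (γ * ((ℓstar : ℝ) - 1)))))) ∧
    (2 : ℝ) ^ (d * ℓstar) * a ℓstar / 2
      + k * ((2 : ℝ) ^ d * a ℓstar / (2 * (φ * (2 : ℝ) ^ (γ * ((ℓstar : ℝ) - 1)))))
      ≤ (2 : ℝ) ^ (d * ℓstar) * a ℓstar := by
  refine ⟨fun ℓ ↦ ?_, dual_objective_le d ℓstar hφ (ha0 ℓstar) hstar.1⟩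
  rw [dual_constraint_eq d ℓstar ℓ hφ.ne']
  exact le_two_rpow_add_two_rpow (by exact_mod_cast hd) ha0 (monotone_nat_of_le_succ hamono)
    haratio ℓstar ℓ

/-- The explicit dual pair `(α̂, β̂)` from the LP-bound lemma is dual-feasible, and its
dual objective value is at most `2^{d ℓ*} a_{ℓ*}`. -/
theorem stmt_3 (d : ℕ) (hd : 1 ≤ d) (γ φ k : ℝ) (hγ : 0 < γ) (hφ : 0 < φ) (hk : 0 < k)
    (ℓstar : ℕ)
    (hstar : IsLeast {ℓ : ℕ | k ≤ φ * (2 : ℝ) ^ (((d : ℝ) + γ) * ((ℓ : ℝ) - 1))} ℓstar)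
    (a : ℕ → ℝ)
    (ha0 : ∀ ℓ, 0 ≤ a ℓ)
    (hamono : ∀ ℓ, a ℓ ≤ a (ℓ + 1))
    (haratio : ∀ ℓ : ℕ, 2 * a (ℓ + 1) ≤ (2 : ℝ) ^ γ * a ℓ) :
    (∀ ℓ : ℕ,
      a ℓ ≤ (2 : ℝ) ^ (-((ℓ : ℝ) * (d : ℝ))) * ((2 : ℝ) ^ (d * ℓstar) * a ℓstar / 2)
        + φ * (2 : ℝ) ^ (γ * ((ℓ : ℝ) - 1)) * (2 : ℝ) ^ (-(d : ℝ)) *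
          ((2 : ℝ) ^ d * a ℓstar / (2 * (φ * (2 : ℝ) ^ (γ * ((ℓstar : ℝ) - 1)))))) ∧
    (2 : ℝ) ^ (d * ℓstar) * a ℓstar / 2
      + k * ((2 : ℝ) ^ d * a ℓstar / (2 * (φ * (2 : ℝ) ^ (γ * ((ℓstar : ℝ) - 1)))))
      ≤ (2 : ℝ) ^ (d * ℓstar) * a ℓstar :=
  stmt_3_general d hd γ φ k hφ ℓstar hstar a ha0 hamono haratio
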